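/- arXiv:1609.01826 — 5 statements merged into one kernel-verified Lean document; each statement's English description precedes it below -/
import Mathlib

section
/- For all positive integers M and N and every cache-size pair (μ_R, μ_T) in the feasible region F, the LP value satisfies τ_u(μ_R, μ_T) ≤ 3 · τ_l(μ_R). (Multiplicative gap between the achievable NDT and the NDT lower bound is at most 3.) -/
/-!
Sharing memory between the corner points `(m, n) = (3, 0)` (everything cached at the receivers,
zero delivery time) and `(0, 1)` with weights `μ_R` and `1 - μ_R` is feasible on `F`, because
`μ_R + 3 μ_T ≥ 1`, and costs `(1 - μ_R) / d_{01}`. Moreover `d_{01} ≥ min (M, N / 3)` (when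
`M < N ≤ 2M` because `ξ < N / (N - M)`), and `(1 - μ_R) / M` and `3 (1 - μ_R) / N` are three
times the `s = 1` term and the first term of `τ_l`.
-/

open Finset

/-- The index set of integer points: `A = {(m,n) : m,n ∈ {0,1,2,3}, m + 3n ≥ 3}`. -/
def idxA : Finset (ℕ × ℕ) :=
  (Finset.range 4 ×ˢ Finset.range 4).filter (fun p => 3 ≤ p.1 + 3 * p.2)

/-- The per-user DoF values `d_{mn}(M,N)` of the paper. For `m = 3` the value is
irrelevant (the objective coefficient is zero) and is set to `1`. -/
noncomputable def dof (M N : ℕ) (m n : ℕ) : ℝ :=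
  let Mr : ℝ := M
  let Nr : ℝ := N
  let kminus : ℝ := min Mr Nr
  let kplus : ℝ := max Mr Nr
  let ξ : ℝ := ((⌈kminus / (kplus - kminus)⌉ : ℤ) : ℝ)
  match m, n with
  | 0, 1 => if M = N then kminus / 2
            else min (kminus / (2 - 1/ξ)) (kplus / (2 + 1/ξ))
  | 0, 2 => if Nr/Mr ≤ 2/3 then Nr
            else if Nr/Mr ≤ 5/3 then 2*Mr/3
            else if Nr/Mr ≤ 5/2 then 2*Nr/5
            else Mr
  | 0, 3 => min Mr Nr
  | 1, 1 => if Nr/Mr ≤ 1 then 6*Nr/7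
            else if Nr/Mr ≤ 9/7 then 6*Mr/7
            else if Nr/Mr ≤ 3 then 2*Nr/3
            else 2*Mr
  | 1, 2 => if Nr/Mr ≤ 1 then Nr
            else if Nr/Mr ≤ 3/2 then Mr
            else if Nr/Mr ≤ 3 then 2*Nr/3
            else 2*Mr
  | 1, 3 => min Nr (2*Mr)
  | 2, _ => min Nr (3*Mr)
  | _, _ => 1

/-- The feasible cache-size region `F`. -/
def FeasRegion (muR muT : ℝ) : Prop :=
  0 ≤ muR ∧ muR ≤ 1 ∧ 0 ≤ muT ∧ muT ≤ 1 ∧ 1 ≤ muR + 3*muT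

/-- The LP value `τ_u(μ_R, μ_T)`. -/
noncomputable def tauU (M N : ℕ) (muR muT : ℝ) : ℝ :=
  sInf {t : ℝ | ∃ β : ℕ × ℕ → ℝ,
    (∀ p ∈ idxA, 0 ≤ β p ∧ β p ≤ 1) ∧
    (∑ p ∈ idxA, β p) = 1 ∧
    (∑ p ∈ idxA, β p * (p.1 : ℝ) / 3) ≤ muR ∧
    (∑ p ∈ idxA, β p * (p.2 : ℝ) / 3) ≤ muT ∧
    t = ∑ p ∈ idxA, β p * (1 - (p.1 : ℝ)/3) / dof M N p.1 p.2}

/-- The lower-bound function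
`τ_l(μ_R) = max{ (1/N)(1−μ_R), max_{s∈{1,2,3}} (s/(3M))(1 − s μ_R) }`. -/
noncomputable def tauL (M N : ℕ) (muR : ℝ) : ℝ :=
  max ((1/(N:ℝ)) * (1 - muR))
    (max ((1/(3*(M:ℝ))) * (1 - muR))
      (max ((2/(3*(M:ℝ))) * (1 - 2*muR)) ((3/(3*(M:ℝ))) * (1 - 3*muR))))

lemma mem_idxA {p : ℕ × ℕ} : p ∈ idxA ↔ (p.1 < 4 ∧ p.2 < 4) ∧ 3 ≤ p.1 + 3 * p.2 := by
  simp only [idxA, Finset.mem_filter, Finset.mem_product, Finset.mem_range]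

lemma one_div_ceil_div_sub_mem_Ioc {a b : ℝ} (ha : 0 < a) (hab : a < b) :
    1 / ((⌈a / (b - a)⌉ : ℤ) : ℝ) ∈ Set.Ioc 0 1 := by
  have hξ : (1 : ℝ) ≤ ((⌈a / (b - a)⌉ : ℤ) : ℝ) := by
    exact_mod_cast Int.one_le_ceil_iff.mpr (div_pos ha (sub_pos.mpr hab))
  exact ⟨by positivity, div_le_one_of_le₀ hξ (by linarith)⟩

lemma min_le_div_two_sub_inv_ceil {a b : ℝ} (ha : 0 < a) (hab : a < b) :
    min a (b / 3) ≤ a / (2 - 1 / ((⌈a / (b - a)⌉ : ℤ) : ℝ)) := by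
  have hba : 0 < b - a := sub_pos.mpr hab
  rcases le_or_gt b (2 * a) with hb | hb
  · obtain ⟨hinv₀, hinv⟩ := one_div_ceil_div_sub_mem_Ioc ha hab
    set ξ : ℝ := ((⌈a / (b - a)⌉ : ℤ) : ℝ) with hξ
    -- `ξ < a / (b - a) + 1 = b / (b - a)`, i.e. `b / ξ > b - a`
    have hbξ : b - a < b * (1 / ξ) := by
      have := Int.ceil_lt_add_one (a / (b - a))
      rw [← hξ, div_add_one hba.ne', add_sub_cancel, lt_div_iff₀ hba] at this
      rw [mul_one_div, lt_div_iff₀ (one_div_pos.mp hinv₀)]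
      linarith
    refine (min_le_right _ _).trans ?_
    rw [div_le_div_iff₀ (by norm_num) (by linarith)]
    nlinarith
  · have hξ : ⌈a / (b - a)⌉ = 1 := by
      rw [Int.ceil_eq_iff, div_le_iff₀ hba]
      exact ⟨by norm_num; positivity, by push_cast; linarith⟩
    rw [hξ]
    norm_num

lemma dof_zero_one (M N : ℕ) : dof M N 0 1 =
    if M = N then min (M : ℝ) N / 2
    else
      min (min (M : ℝ) N /
          (2 - 1 / ((⌈min (M : ℝ) N / (max (M : ℝ) N - min (M : ℝ) N)⌉ : ℤ) : ℝ)))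
        (max (M : ℝ) N /
          (2 + 1 / ((⌈min (M : ℝ) N / (max (M : ℝ) N - min (M : ℝ) N)⌉ : ℤ) : ℝ))) :=
  rfl

lemma min_le_dof_zero_one {M N : ℕ} (hM : 0 < M) (hN : 0 < N) :
    min (M : ℝ) (N / 3) ≤ dof M N 0 1 := by
  have hMr : (0 : ℝ) < M := by exact_mod_cast hM
  have hNr : (0 : ℝ) < N := by exact_mod_cast hN
  rw [dof_zero_one]
  split_ifs with hMN
  · subst hMN
    rw [min_self, min_eq_right (by linarith)]
    linarith
  rcases lt_or_gt_of_ne (Nat.cast_injective.ne hMN : (M : ℝ) ≠ N) with hlt | hgt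
  · rw [min_eq_left hlt.le, max_eq_right hlt.le]
    obtain ⟨hinv₀, hinv₁⟩ := one_div_ceil_div_sub_mem_Ioc hMr hlt
    refine le_min (min_le_div_two_sub_inv_ceil hMr hlt) ((min_le_right _ _).trans ?_)
    exact div_le_div_of_nonneg_left hNr.le (by linarith) (by linarith)
  · rw [min_eq_right hgt.le, max_eq_left hgt.le]
    obtain ⟨hinv₀, hinv₁⟩ := one_div_ceil_div_sub_mem_Ioc hNr hgt
    refine (min_le_right _ _).trans (le_min ?_ ?_)
    · exact div_le_div_of_nonneg_left hNr.le (by linarith) (by linarith)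
    · calc (N : ℝ) / 3 ≤ M / 3 := by linarith
        _ ≤ M / (2 + 1 / ((⌈(N : ℝ) / (M - N)⌉ : ℤ) : ℝ)) :=
          div_le_div_of_nonneg_left hMr.le (by linarith) (by linarith)

lemma dof_pos_of_mem_idxA {M N : ℕ} (hM : 0 < M) (hN : 0 < N) {p : ℕ × ℕ} (hp : p ∈ idxA) :
    0 < dof M N p.1 p.2 := by
  have hMr : (0 : ℝ) < M := by exact_mod_cast hM
  have hNr : (0 : ℝ) < N := by exact_mod_cast hN
  obtain ⟨m, n⟩ := p
  obtain ⟨⟨hm, hn⟩, hmn⟩ := mem_idxA.mp hp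
  interval_cases m <;> interval_cases n <;>
    first
    | omega
    | exact lt_of_lt_of_le (by positivity) (min_le_dof_zero_one hM hN)
    | (simp only [dof]; positivity)

lemma sum_ite_add_ite_mul {α R : Type*} [DecidableEq α] [CommSemiring R] {s : Finset α}
    {a b : α} (ha : a ∈ s) (hb : b ∈ s) (x y : R) (g : α → R) :
    ∑ p ∈ s, ((if p = a then x else 0) + (if p = b then y else 0)) * g p =
      x * g a + y * g b := by
  simp only [add_mul, ite_mul, zero_mul, Finset.sum_add_distrib, Finset.sum_ite_eq', ha, hb,
    if_true]

lemma tauU_le {M N : ℕ} (hM : 0 < M) (hN : 0 < N) {muR muT : ℝ} (β : ℕ × ℕ → ℝ)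
    (hβ : ∀ p ∈ idxA, 0 ≤ β p ∧ β p ≤ 1) (hsum : ∑ p ∈ idxA, β p = 1)
    (hR : ∑ p ∈ idxA, β p * (p.1 : ℝ) / 3 ≤ muR)
    (hT : ∑ p ∈ idxA, β p * (p.2 : ℝ) / 3 ≤ muT) :
    tauU M N muR muT ≤ ∑ p ∈ idxA, β p * (1 - (p.1 : ℝ) / 3) / dof M N p.1 p.2 := by
  refine csInf_le ⟨0, ?_⟩ ⟨β, hβ, hsum, hR, hT, rfl⟩
  rintro _ ⟨β', hβ', -, -, -, rfl⟩
  refine Finset.sum_nonneg fun p hp => div_nonneg (mul_nonneg (hβ' p hp).1 ?_)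
    (dof_pos_of_mem_idxA hM hN hp).le
  have : (p.1 : ℝ) ≤ 3 := by exact_mod_cast Nat.le_of_lt_succ (mem_idxA.mp hp).1.1
  linarith

lemma tauU_le_div_dof_zero_one {M N : ℕ} (hM : 0 < M) (hN : 0 < N) {muR muT : ℝ}
    (h0R : 0 ≤ muR) (h1R : muR ≤ 1) (hT : 1 ≤ muR + 3 * muT) :
    tauU M N muR muT ≤ (1 - muR) / dof M N 0 1 := by
  have h30 : ((3, 0) : ℕ × ℕ) ∈ idxA := by decide
  have h01 : ((0, 1) : ℕ × ℕ) ∈ idxA := by decide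
  let β : ℕ × ℕ → ℝ := fun p =>
    (if p = (3, 0) then muR else 0) + (if p = (0, 1) then 1 - muR else 0)
  have hβsum (g : ℕ × ℕ → ℝ) :
      ∑ p ∈ idxA, β p * g p = muR * g (3, 0) + (1 - muR) * g (0, 1) :=
    sum_ite_add_ite_mul h30 h01 _ _ g
  convert tauU_le hM hN β ?_ ?_ ?_ ?_ using 1
  · simp_rw [mul_div_assoc, hβsum]
    norm_num [div_eq_mul_inv]
  · intro p _
    by_cases h₁ : p = (3, 0) <;> by_cases h₂ : p = (0, 1) <;> simp_all [β]
  · simpa using hβsum 1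
  · simp_rw [mul_div_assoc, hβsum]
    norm_num
  · simp_rw [mul_div_assoc, hβsum]
    norm_num
    linarith

lemma div_min_le_three_mul_tauL (M N : ℕ) (muR : ℝ) :
    (1 - muR) / min (M : ℝ) (N / 3) ≤ 3 * tauL M N muR := by
  rcases min_choice (M : ℝ) (N / 3) with hmin | hmin <;> rw [hmin]
  · have : (1 / (3 * (M : ℝ))) * (1 - muR) ≤ tauL M N muR :=
      (le_max_left _ _).trans (le_max_right _ _)
    calc (1 - muR) / M = 3 * ((1 / (3 * (M : ℝ))) * (1 - muR)) := by field_simp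
      _ ≤ 3 * tauL M N muR := by linarith
  · have : (1 / (N : ℝ)) * (1 - muR) ≤ tauL M N muR := le_max_left _ _
    calc (1 - muR) / (N / 3) = 3 * ((1 / (N : ℝ)) * (1 - muR)) := by field_simp
      _ ≤ 3 * tauL M N muR := by linarith

/-- For all positive integers `M`, `N` and every `(μ_R, μ_T)` in the
feasible region, the LP value satisfies `τ_u(μ_R, μ_T) ≤ 3 · τ_l(μ_R)`. -/
theorem multiplicative_gap_le_three (M N : ℕ) (hM : 0 < M) (hN : 0 < N)
    (muR muT : ℝ) (h : FeasRegion muR muT) :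
    tauU M N muR muT ≤ 3 * tauL M N muR := by
  obtain ⟨h0R, h1R, -, -, hT⟩ := h
  have hMr : (0 : ℝ) < M := by exact_mod_cast hM
  have hNr : (0 : ℝ) < N := by exact_mod_cast hN
  calc tauU M N muR muT ≤ (1 - muR) / dof M N 0 1 := tauU_le_div_dof_zero_one hM hN h0R h1R hT
    _ ≤ (1 - muR) / min (M : ℝ) (N / 3) :=
      div_le_div_of_nonneg_left (by linarith) (by positivity) (min_le_dof_zero_one hM hN)
    _ ≤ 3 * tauL M N muR := div_min_le_three_mul_tauL M N muR
end

section
/- If N ≤ M/3, then for every (μ_R, μ_T) in the feasible region F, the LP value satisfies τ_u(μ_R, μ_T) = (1/N)(1 − μ_R), and this coincides with the lower-bound function: τ_u(μ_R,μ_T) = τ_l(μ_R). -/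
open Finset

/-!
Every DoF value lies in `(0, N]`, so each objective coefficient `(1 - m/3)/d_{mn}` is at least
`(1 - m/3)/N`; against a feasible `β` this gives `τ_u ≥ (1 - Σ β_{mn} m/3)/N ≥ (1 - μ_R)/N`.
When `3N ≤ M` we have `ξ = 1` and `d_{01} = min{N, M/3} = N`, so the point `β_{30} = μ_R`,
`β_{01} = 1 - μ_R` (feasible because `μ_R + 3μ_T ≥ 1`) attains this bound. For `N ≤ M` the term
`(1 - μ_R)/N` also dominates the other terms of `τ_l`.
-/

namespace CacheLP

variable {M N : ℕ}

lemma dof_zero_one_mem_Ioc (hM : 0 < M) (hN : 0 < N) :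
    dof M N 0 1 ∈ Set.Ioc 0 (N : ℝ) := by
  have hM' : (0 : ℝ) < M := by exact_mod_cast hM
  have hN' : (0 : ℝ) < N := by exact_mod_cast hN
  simp only [dof]
  split_ifs with hMN
  · subst hMN; simp only [min_self]; constructor <;> linarith
  · have hlt : min (M : ℝ) N < max (M : ℝ) N := by
      rw [min_lt_max]; exact_mod_cast hMN
    have hmin : 0 < min (M : ℝ) N := lt_min hM' hN'
    set ξ : ℝ := ((⌈min (M : ℝ) N / (max (M : ℝ) N - min (M : ℝ) N)⌉ : ℤ) : ℝ)
    have hξ : 1 ≤ ξ := by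
      have : 0 < ⌈min (M : ℝ) N / (max (M : ℝ) N - min (M : ℝ) N)⌉ :=
        Int.ceil_pos.2 (div_pos hmin (by linarith))
      have h1 : ((1 : ℤ) : ℝ) ≤ ξ := Int.cast_le.2 this
      rwa [Int.cast_one] at h1
    have hinv : 1 / ξ ≤ 1 := by rw [div_le_one (by linarith)]; exact hξ
    have hinv0 : 0 < 1 / ξ := by positivity
    constructor
    · exact lt_min (div_pos hmin (by linarith)) (div_pos (by linarith) (by linarith))
    · calc min (min (M : ℝ) N / (2 - 1 / ξ)) (max (M : ℝ) N / (2 + 1 / ξ))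
          ≤ min (M : ℝ) N / (2 - 1 / ξ) := min_le_left _ _
        _ ≤ min (M : ℝ) N := div_le_self hmin.le (by linarith)
        _ ≤ N := min_le_right _ _

lemma dof_mem_Ioc (hM : 0 < M) (hN : 0 < N) (m n : ℕ) :
    dof M N m n ∈ Set.Ioc 0 (N : ℝ) := by
  have hM' : (0 : ℝ) < M := by exact_mod_cast hM
  have hN' : (1 : ℝ) ≤ N := by exact_mod_cast hN
  match m, n with
  | 0, 1 => exact dof_zero_one_mem_Ioc hM hN
  | 0, 2 | 1, 1 | 1, 2 =>
    simp only [dof, Set.mem_Ioc]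
    split_ifs <;> simp only [div_le_iff₀ hM', not_le] at * <;> constructor <;> linarith
  | 0, 3 | 1, 3 | 2, _ =>
    simp only [dof, Set.mem_Ioc]
    exact ⟨lt_min (by linarith) (by linarith), by simp⟩
  | 0, 0 | 1, 0 | _ + 3, _ | 0, _ + 4 | 1, _ + 4 =>
    simp only [dof, Set.mem_Ioc]; constructor <;> linarith

lemma dof_zero_one_of_three_mul_le (hN : 0 < N) (hNM : 3 * N ≤ M) : dof M N 0 1 = N := by
  have hN' : (0 : ℝ) < N := by exact_mod_cast hN
  have hNM' : 3 * (N : ℝ) ≤ M := by exact_mod_cast hNM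
  have hne : M ≠ N := by omega
  have hmin : min (M : ℝ) N = N := min_eq_right (by linarith)
  have hmax : max (M : ℝ) N = M := max_eq_left (by linarith)
  have hceil : ⌈(N : ℝ) / (M - N)⌉ = 1 := by
    rw [Int.ceil_eq_iff]
    constructor
    · norm_num
      exact div_pos hN' (by linarith)
    · rw [div_le_iff₀ (by linarith)]
      norm_num
      linarith
  simp only [dof, hmin, hmax, if_neg hne, hceil]
  norm_num
  linarith

lemma one_sub_div_le_div_dof (hM : 0 < M) (hN : 0 < N) {m : ℕ} (hm : m ≤ 3) (n : ℕ) :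
    (1 - (m : ℝ) / 3) / N ≤ (1 - (m : ℝ) / 3) / dof M N m n := by
  obtain ⟨hpos, hle⟩ := dof_mem_Ioc hM hN m n
  have : (m : ℝ) ≤ 3 := by exact_mod_cast hm
  exact div_le_div_of_nonneg_left (by linarith) hpos hle

noncomputable def lpObjective (M N : ℕ) (β : ℕ × ℕ → ℝ) : ℝ :=
  ∑ p ∈ idxA, β p * (1 - (p.1 : ℝ) / 3) / dof M N p.1 p.2

lemma one_div_mul_one_sub_le_lpObjective (hM : 0 < M) (hN : 0 < N) {β : ℕ × ℕ → ℝ} {muR : ℝ}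
    (hβ : ∀ p ∈ idxA, 0 ≤ β p) (hsum : ∑ p ∈ idxA, β p = 1)
    (hR : ∑ p ∈ idxA, β p * (p.1 : ℝ) / 3 ≤ muR) :
    1 / (N : ℝ) * (1 - muR) ≤ lpObjective M N β := by
  have hN' : (0 : ℝ) < N := by exact_mod_cast hN
  calc 1 / (N : ℝ) * (1 - muR)
      ≤ 1 / (N : ℝ) * (∑ p ∈ idxA, β p - ∑ p ∈ idxA, β p * (p.1 : ℝ) / 3) := by
        rw [hsum]; gcongr
    _ = ∑ p ∈ idxA, β p * ((1 - (p.1 : ℝ) / 3) / N) := by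
        rw [← Finset.sum_sub_distrib, Finset.mul_sum]
        exact Finset.sum_congr rfl fun p _ => by ring
    _ ≤ lpObjective M N β := by
        unfold lpObjective
        refine Finset.sum_le_sum fun p hp => ?_
        have hp3 : p.1 ≤ 3 := by simp only [idxA, Finset.mem_filter, Finset.mem_product,
          Finset.mem_range] at hp; omega
        rw [mul_div_assoc]
        exact mul_le_mul_of_nonneg_left (one_sub_div_le_div_dof hM hN hp3 p.2) (hβ p hp)

def cornerPoint (muR : ℝ) : ℕ × ℕ → ℝ :=
  fun p => if p = (3, 0) then muR else if p = (0, 1) then 1 - muR else 0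

lemma sum_cornerPoint_mul (muR : ℝ) (g : ℕ × ℕ → ℝ) :
    ∑ p ∈ idxA, cornerPoint muR p * g p = (1 - muR) * g (0, 1) + muR * g (3, 0) := by
  simp [cornerPoint, idxA, Finset.sum_filter, Finset.sum_product, Finset.sum_range_succ]

lemma tauU_eq_of_three_mul_le (hN : 0 < N) (hNM : 3 * N ≤ M) {muR muT : ℝ}
    (h : FeasRegion muR muT) : tauU M N muR muT = 1 / (N : ℝ) * (1 - muR) := by
  obtain ⟨hR0, hR1, -, -, hRT⟩ := h
  refine IsLeast.csInf_eq ⟨⟨cornerPoint muR, ?_, ?_, ?_, ?_, ?_⟩, ?_⟩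
  · intro p _
    unfold cornerPoint
    split_ifs <;> constructor <;> linarith
  · simpa using sum_cornerPoint_mul muR fun _ => 1
  · simp only [mul_div_assoc, sum_cornerPoint_mul]
    norm_num
  · simp only [mul_div_assoc, sum_cornerPoint_mul]
    norm_num
    linarith
  · simp only [mul_div_assoc, sum_cornerPoint_mul, dof_zero_one_of_three_mul_le hN hNM]
    norm_num
    ring
  · rintro t ⟨β, hβ, hsum, hR, -, rfl⟩
    exact one_div_mul_one_sub_le_lpObjective (by omega) hN (fun p hp => (hβ p hp).1) hsum hR

lemma div_three_mul_one_sub_le (hN : 0 < N) (hNM : N ≤ M) {muR s : ℝ} (hR0 : 0 ≤ muR)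
    (hR1 : muR ≤ 1) (hs1 : 1 ≤ s) (hs3 : s ≤ 3) :
    s / (3 * M) * (1 - s * muR) ≤ 1 / (N : ℝ) * (1 - muR) := by
  have hN' : (0 : ℝ) < N := by exact_mod_cast hN
  have hNM' : (N : ℝ) ≤ M := by exact_mod_cast hNM
  calc s / (3 * M) * (1 - s * muR)
      ≤ s / (3 * M) * (1 - muR) := by gcongr; nlinarith
    _ ≤ 1 / (N : ℝ) * (1 - muR) := by
        refine mul_le_mul_of_nonneg_right ?_ (by linarith)
        rw [div_le_div_iff₀ (by linarith) hN']
        nlinarith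

lemma tauL_eq_of_le (hN : 0 < N) (hNM : N ≤ M) {muR : ℝ} (hR0 : 0 ≤ muR) (hR1 : muR ≤ 1) :
    tauL M N muR = 1 / (N : ℝ) * (1 - muR) := by
  have key {s : ℝ} := div_three_mul_one_sub_le hN hNM (s := s) hR0 hR1
  refine max_eq_left (max_le ?_ (max_le (key (by norm_num) (by norm_num)) (key (by norm_num) le_rfl)))
  simpa using key le_rfl (by norm_num : (1 : ℝ) ≤ 3)

end CacheLP

theorem tauU_eq_case_N_le_M_div_three_general (M N : ℕ) (hN : 0 < N)
    (hNM : (N : ℝ) ≤ (M : ℝ) / 3)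
    (muR muT : ℝ) (h : FeasRegion muR muT) :
    tauU M N muR muT = (1/(N:ℝ)) * (1 - muR) ∧
    tauU M N muR muT = tauL M N muR := by
  have h3 : 3 * N ≤ M := by
    have : 3 * (N : ℝ) ≤ M := by linarith
    exact_mod_cast this
  have hU := CacheLP.tauU_eq_of_three_mul_le hN h3 h
  exact ⟨hU, hU.trans (CacheLP.tauL_eq_of_le hN (by omega) h.1 h.2.1).symm⟩

/-- If `N ≤ M/3`, then for every `(μ_R, μ_T)` in the feasible region,
`τ_u(μ_R, μ_T) = (1/N)(1 − μ_R)`, and this coincides with the lower bound `τ_l(μ_R)`. -/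
theorem tauU_eq_case_N_le_M_div_three (M N : ℕ) (hM : 0 < M) (hN : 0 < N)
    (hNM : (N : ℝ) ≤ (M : ℝ) / 3)
    (muR muT : ℝ) (h : FeasRegion muR muT) :
    tauU M N muR muT = (1/(N:ℝ)) * (1 - muR) ∧
    tauU M N muR muT = tauL M N muR :=
  tauU_eq_case_N_le_M_div_three_general M N hN hNM muR muT h
end

section
/- If N ≤ M, then for every (μ_R, μ_T) in the feasible region F with μ_R + μ_T ≥ 1, the LP value satisfies τ_u(μ_R, μ_T) = (1/N)(1 − μ_R) = τ_l(μ_R). -/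
open Finset

/-! When `N ≤ M`, every DoF value `d_{mn}` with `m < 3` is at most `N`, so the objective is at
least `∑ β_{mn} (1 - m/3) / N = (1 - ∑ β_{mn} m/3) / N ≥ (1 - μ_R) / N`. On the anti-diagonal
`m + n = 3` the DoF equals `N` exactly, so splitting the mass between two adjacent anti-diagonal
points with `∑ β_{mn} m/3 = μ_R` attains the bound; there `∑ β_{mn} n/3 = 1 - μ_R ≤ μ_T`.
Finally `N ≤ M` makes `(1 - μ_R)/N` the largest of the four terms of `τ_l`. -/

section Dof

variable {M N : ℕ}

lemma dof_zero_three (hNM : N ≤ M) : dof M N 0 3 = N := by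
  simp only [dof]
  exact min_eq_right (by exact_mod_cast hNM)

lemma dof_one_one (hNM : N ≤ M) : dof M N 1 1 = 6 * N / 7 := by
  simp only [dof, div_le_one_of_le₀ (by exact_mod_cast hNM : (N : ℝ) ≤ M) (Nat.cast_nonneg M),
    if_true]

lemma dof_one_two (hNM : N ≤ M) : dof M N 1 2 = N := by
  simp only [dof, div_le_one_of_le₀ (by exact_mod_cast hNM : (N : ℝ) ≤ M) (Nat.cast_nonneg M),
    if_true]

lemma dof_one_three (hNM : N ≤ M) : dof M N 1 3 = N := by
  simp only [dof]
  exact min_eq_left (by norm_cast; omega)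

lemma dof_two (hNM : N ≤ M) (n : ℕ) : dof M N 2 n = N := by
  simp only [dof]
  exact min_eq_left (by norm_cast; omega)

lemma dof_zero_one_mem_Ioc (hN : 0 < N) (hNM : N ≤ M) : dof M N 0 1 ∈ Set.Ioc 0 (N : ℝ) := by
  have hNr : (0 : ℝ) < N := by exact_mod_cast hN
  have hNMr : (N : ℝ) ≤ M := by exact_mod_cast hNM
  simp only [dof, min_eq_right hNMr, max_eq_left hNMr]
  split_ifs with hMN
  · exact ⟨by positivity, by linarith⟩
  have hlt : (N : ℝ) < M := lt_of_le_of_ne hNMr (by exact_mod_cast Ne.symm hMN)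
  set ξ : ℝ := ((⌈(N : ℝ) / (M - N)⌉ : ℤ) : ℝ)
  have hξ : 1 ≤ ξ := Int.cast_one_le_of_pos (Int.ceil_pos.mpr (div_pos hNr (sub_pos.mpr hlt)))
  have hinv : 1 / ξ ≤ 1 := by rw [div_le_one (by linarith)]; exact hξ
  have hinv0 : 0 < 1 / ξ := by positivity
  refine ⟨lt_min (div_pos hNr (by linarith)) (div_pos (by linarith) (by linarith)), ?_⟩
  calc min ((N : ℝ) / (2 - 1 / ξ)) (M / (2 + 1 / ξ)) ≤ N / (2 - 1 / ξ) := min_le_left _ _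
    _ ≤ N / 1 := div_le_div_of_nonneg_left hNr.le one_pos (by linarith)
    _ = N := div_one _

lemma dof_zero_two_mem_Ioc (hN : 0 < N) (hNM : N ≤ M) : dof M N 0 2 ∈ Set.Ioc 0 (N : ℝ) := by
  have hNr : (0 : ℝ) < N := by exact_mod_cast hN
  have hMr : (0 : ℝ) < M := by exact_mod_cast hN.trans_le hNM
  have hdiv : (N : ℝ) / M ≤ 5 / 3 :=
    (div_le_one_of_le₀ (by exact_mod_cast hNM) hMr.le).trans (by norm_num)
  simp only [dof, hdiv, if_true]
  split_ifs with h23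
  · exact ⟨hNr, le_rfl⟩
  · rw [not_le, lt_div_iff₀ hMr] at h23
    exact ⟨by positivity, by linarith⟩

lemma dof_mem_Ioc (hN : 0 < N) (hNM : N ≤ M) {p : ℕ × ℕ} (hp : p ∈ idxA) (hp3 : p.1 < 3) :
    dof M N p.1 p.2 ∈ Set.Ioc 0 (N : ℝ) := by
  have hNr : (0 : ℝ) < N := by exact_mod_cast hN
  obtain ⟨m, n⟩ := p
  simp only [idxA, mem_filter, mem_product, mem_range] at hp hp3
  obtain ⟨⟨-, hn⟩, hmn⟩ := hp
  interval_cases m <;> interval_cases n <;> try omega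
  all_goals dsimp only
  · exact dof_zero_one_mem_Ioc hN hNM
  · exact dof_zero_two_mem_Ioc hN hNM
  · rw [dof_zero_three hNM]; exact ⟨hNr, le_rfl⟩
  · rw [dof_one_one hNM]; exact ⟨by positivity, by linarith⟩
  · rw [dof_one_two hNM]; exact ⟨hNr, le_rfl⟩
  · rw [dof_one_three hNM]; exact ⟨hNr, le_rfl⟩
  all_goals rw [dof_two hNM]; exact ⟨hNr, le_rfl⟩

lemma dof_of_add_eq_three (hNM : N ≤ M) {m n : ℕ} (hm : m < 3) (hmn : m + n = 3) :
    dof M N m n = N := by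
  interval_cases m
  · obtain rfl : n = 3 := by omega
    exact dof_zero_three hNM
  · obtain rfl : n = 2 := by omega
    exact dof_one_two hNM
  · exact dof_two hNM n

end Dof

section LP

variable {M N : ℕ} {muR muT : ℝ}

def IsLPFeasible (muR muT : ℝ) (β : ℕ × ℕ → ℝ) : Prop :=
  (∀ p ∈ idxA, 0 ≤ β p ∧ β p ≤ 1) ∧
  (∑ p ∈ idxA, β p) = 1 ∧
  (∑ p ∈ idxA, β p * (p.1 : ℝ) / 3) ≤ muR ∧
  (∑ p ∈ idxA, β p * (p.2 : ℝ) / 3) ≤ muT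

noncomputable def lpObjective (M N : ℕ) (β : ℕ × ℕ → ℝ) : ℝ :=
  ∑ p ∈ idxA, β p * (1 - (p.1 : ℝ) / 3) / dof M N p.1 p.2

lemma tauU_eq_sInf (M N : ℕ) (muR muT : ℝ) :
    tauU M N muR muT = sInf {t | ∃ β, IsLPFeasible muR muT β ∧ t = lpObjective M N β} := by
  simp only [tauU, IsLPFeasible, lpObjective, and_assoc]

lemma div_le_one_sub_div_dof (hN : 0 < N) (hNM : N ≤ M) {p : ℕ × ℕ} (hp : p ∈ idxA) :
    (1 - (p.1 : ℝ) / 3) / N ≤ (1 - (p.1 : ℝ) / 3) / dof M N p.1 p.2 := by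
  have hp3 : p.1 ≤ 3 := by
    simp only [idxA, mem_filter, mem_product, mem_range] at hp
    omega
  rcases hp3.lt_or_eq with hp3 | hp3
  · obtain ⟨hpos, hle⟩ := dof_mem_Ioc hN hNM hp hp3
    have : (p.1 : ℝ) ≤ 3 := by exact_mod_cast hp3.le
    exact div_le_div_of_nonneg_left (by linarith) hpos hle
  · simp [hp3]

lemma div_le_lpObjective (hN : 0 < N) (hNM : N ≤ M) {β : ℕ × ℕ → ℝ}
    (hβ : IsLPFeasible muR muT β) : (1 - muR) / N ≤ lpObjective M N β := by
  obtain ⟨hβ01, hsum, hR, -⟩ := hβ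
  calc (1 - muR) / N ≤ (∑ p ∈ idxA, β p - ∑ p ∈ idxA, β p * (p.1 : ℝ) / 3) / N := by
        rw [hsum]; gcongr
    _ = ∑ p ∈ idxA, β p * ((1 - (p.1 : ℝ) / 3) / N) := by
        rw [← sum_sub_distrib, sum_div]
        exact sum_congr rfl fun p _ => by ring
    _ ≤ ∑ p ∈ idxA, β p * ((1 - (p.1 : ℝ) / 3) / dof M N p.1 p.2) :=
        sum_le_sum fun p hp =>
          mul_le_mul_of_nonneg_left (div_le_one_sub_div_dof hN hNM hp) (hβ01 p hp).1
    _ = lpObjective M N β := sum_congr rfl fun p _ => by ring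

def twoPoint (a b : ℕ × ℕ) (x y : ℝ) (p : ℕ × ℕ) : ℝ :=
  (if p = a then x else 0) + (if p = b then y else 0)

lemma sum_twoPoint_mul {a b : ℕ × ℕ} (ha : a ∈ idxA) (hb : b ∈ idxA) (x y : ℝ)
    (f : ℕ × ℕ → ℝ) : ∑ p ∈ idxA, twoPoint a b x y p * f p = x * f a + y * f b := by
  simp only [twoPoint, add_mul, ite_mul, zero_mul, sum_add_distrib, sum_ite_eq', ha, hb, if_true]

lemma isLPFeasible_twoPoint {a b : ℕ × ℕ} (ha : a ∈ idxA) (hb : b ∈ idxA) (hab : a ≠ b)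
    {x y : ℝ} (hx : 0 ≤ x) (hy : 0 ≤ y) (hxy : x + y = 1)
    (hR : x * a.1 / 3 + y * b.1 / 3 ≤ muR) (hT : x * a.2 / 3 + y * b.2 / 3 ≤ muT) :
    IsLPFeasible muR muT (twoPoint a b x y) := by
  have hmoment (f : ℕ × ℕ → ℝ) :
      ∑ p ∈ idxA, twoPoint a b x y p * f p / 3 = (x * f a + y * f b) / 3 := by
    rw [← sum_div, sum_twoPoint_mul ha hb]
  refine ⟨fun p _ => ?_, by simpa [hxy] using sum_twoPoint_mul ha hb x y 1, ?_, ?_⟩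
  · unfold twoPoint
    split_ifs with h₁ h₂ <;> first | exact absurd (h₁.symm.trans h₂) hab | constructor <;> linarith
  · rw [hmoment fun p => (p.1 : ℝ)]; linarith
  · rw [hmoment fun p => (p.2 : ℝ)]; linarith

lemma one_sub_div_dof_of_add_eq_three (hNM : N ≤ M) {m n : ℕ} (hmn : m + n = 3) :
    (1 - (m : ℝ) / 3) / dof M N m n = (1 - (m : ℝ) / 3) / N := by
  rcases (show m ≤ 3 by omega).lt_or_eq with hm | rfl
  · rw [dof_of_add_eq_three hNM hm hmn]
  · norm_num

lemma lpObjective_twoPoint_of_add_eq_three (hNM : N ≤ M) {a b : ℕ × ℕ} (ha : a ∈ idxA)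
    (hb : b ∈ idxA) (ha3 : a.1 + a.2 = 3) (hb3 : b.1 + b.2 = 3) {x y : ℝ} (hxy : x + y = 1)
    (hR : x * a.1 + y * b.1 = 3 * muR) :
    lpObjective M N (twoPoint a b x y) = (1 - muR) / N := by
  have key := sum_twoPoint_mul ha hb x y fun p => (1 - (p.1 : ℝ) / 3) / dof M N p.1 p.2
  simp only [one_sub_div_dof_of_add_eq_three hNM ha3, one_sub_div_dof_of_add_eq_three hNM hb3]
    at key
  calc lpObjective M N (twoPoint a b x y)
      = x * ((1 - (a.1 : ℝ) / 3) / N) + y * ((1 - (b.1 : ℝ) / 3) / N) := by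
        rw [← key, lpObjective]
        exact sum_congr rfl fun p _ => by ring
    _ = (x + y - (x * a.1 + y * b.1) / 3) / N := by ring
    _ = (1 - muR) / N := by rw [hxy, hR]; ring

lemma isLPFeasible_twoPoint_of_add_eq_three {a b : ℕ × ℕ} (ha : a ∈ idxA) (hb : b ∈ idxA)
    (hab : a ≠ b) (ha3 : a.1 + a.2 = 3) (hb3 : b.1 + b.2 = 3) {x y : ℝ} (hx : 0 ≤ x) (hy : 0 ≤ y)
    (hxy : x + y = 1) (hR : x * a.1 + y * b.1 = 3 * muR) (hT : 1 - muR ≤ muT) :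
    IsLPFeasible muR muT (twoPoint a b x y) := by
  have ha3' : (a.1 : ℝ) + a.2 = 3 := by exact_mod_cast ha3
  have hb3' : (b.1 : ℝ) + b.2 = 3 := by exact_mod_cast hb3
  refine isLPFeasible_twoPoint ha hb hab hx hy hxy (by linarith) ?_
  have hn : x * a.2 + y * b.2 = 3 * (1 - muR) := by
    linear_combination x * ha3' + y * hb3' - hR + 3 * hxy
  linarith

lemma exists_isLPFeasible_lpObjective_eq (hNM : N ≤ M) (h0 : 0 ≤ muR) (h1 : muR ≤ 1)
    (hT : 1 - muR ≤ muT) : ∃ β, IsLPFeasible muR muT β ∧ lpObjective M N β = (1 - muR) / N := by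
  suffices key : ∀ a b : ℕ × ℕ, a ∈ idxA → b ∈ idxA → a ≠ b → a.1 + a.2 = 3 → b.1 + b.2 = 3 →
      ∀ x y : ℝ, 0 ≤ x → 0 ≤ y → x + y = 1 → x * a.1 + y * b.1 = 3 * muR →
      ∃ β, IsLPFeasible muR muT β ∧ lpObjective M N β = (1 - muR) / N by
    rcases le_or_gt muR (1 / 3) with h13 | h13
    · exact key (0, 3) (1, 2) (by decide) (by decide) (by decide) rfl rfl (1 - 3 * muR) (3 * muR)
        (by linarith) (by linarith) (by ring) (by push_cast; ring)
    rcases le_or_gt muR (2 / 3) with h23 | h23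
    · exact key (1, 2) (2, 1) (by decide) (by decide) (by decide) rfl rfl (2 - 3 * muR)
        (3 * muR - 1) (by linarith) (by linarith) (by ring) (by push_cast; ring)
    · exact key (2, 1) (3, 0) (by decide) (by decide) (by decide) rfl rfl (3 - 3 * muR)
        (3 * muR - 2) (by linarith) (by linarith) (by ring) (by push_cast; ring)
  intro a b ha hb hab ha3 hb3 x y hx hy hxy hR
  exact ⟨twoPoint a b x y, isLPFeasible_twoPoint_of_add_eq_three ha hb hab ha3 hb3 hx hy hxy hR hT,
    lpObjective_twoPoint_of_add_eq_three hNM ha hb ha3 hb3 hxy hR⟩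

end LP

lemma mul_one_sub_mul_le_div {M N : ℕ} (hN : 0 < N) (hNM : N ≤ M) {s μ : ℝ} (hs₁ : 1 ≤ s)
    (hs₃ : s ≤ 3) (hμ₀ : 0 ≤ μ) (hμ₁ : μ ≤ 1) : s / (3 * M) * (1 - s * μ) ≤ (1 - μ) / N := by
  have hNr : (0 : ℝ) < N := by exact_mod_cast hN
  have hNMr : (N : ℝ) ≤ M := by exact_mod_cast hNM
  -- `3 (1 - μ) - s (1 - s μ) = (1 - μ) (3 - s) + μ s (s - 1)`
  have key : s * (1 - s * μ) ≤ 3 * (1 - μ) := by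
    nlinarith [mul_nonneg (sub_nonneg.mpr hμ₁) (sub_nonneg.mpr hs₃),
      mul_nonneg hμ₀ (mul_nonneg (by linarith : 0 ≤ s) (sub_nonneg.mpr hs₁))]
  calc s / (3 * M) * (1 - s * μ) = s * (1 - s * μ) / 3 / M := by ring
    _ ≤ 3 * (1 - μ) / 3 / M := by gcongr
    _ = (1 - μ) / M := by ring
    _ ≤ (1 - μ) / N := div_le_div_of_nonneg_left (by linarith) hNr hNMr

lemma tauL_eq_of_le {M N : ℕ} (hN : 0 < N) (hNM : N ≤ M) {muR : ℝ} (h0 : 0 ≤ muR)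
    (h1 : muR ≤ 1) : tauL M N muR = 1 / N * (1 - muR) := by
  have hterm (s : ℝ) (hs₁ : 1 ≤ s) (hs₃ : s ≤ 3) :=
    mul_one_sub_mul_le_div hN hNM hs₁ hs₃ h0 h1
  rw [tauL, one_div_mul_eq_div]
  refine max_eq_left (max_le ?_ (max_le ?_ ?_))
  · simpa using hterm 1 le_rfl (by norm_num)
  · exact hterm 2 one_le_two (by norm_num)
  · exact hterm 3 (by norm_num) le_rfl

theorem tauU_eq_case_N_le_M_general (M N : ℕ) (hN : 0 < N)
    (hNM : N ≤ M)
    (muR muT : ℝ) (h : FeasRegion muR muT) (hsum : 1 ≤ muR + muT) :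
    tauU M N muR muT = (1/(N:ℝ)) * (1 - muR) ∧
    tauU M N muR muT = tauL M N muR := by
  obtain ⟨h0, h1, -⟩ := h
  obtain ⟨β, hβ, hβopt⟩ := exists_isLPFeasible_lpObjective_eq hNM h0 h1
    (show 1 - muR ≤ muT by linarith)
  have hτ : tauU M N muR muT = 1 / N * (1 - muR) := by
    rw [tauU_eq_sInf, one_div_mul_eq_div]
    refine IsLeast.csInf_eq ⟨⟨β, hβ, hβopt.symm⟩, ?_⟩
    rintro t ⟨β', hβ', rfl⟩
    exact div_le_lpObjective hN hNM hβ'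
  exact ⟨hτ, hτ.trans (tauL_eq_of_le hN hNM h0 h1).symm⟩

/-- If `N ≤ M`, then for every `(μ_R, μ_T)` in the feasible region with
`μ_R + μ_T ≥ 1`, one has `τ_u(μ_R, μ_T) = (1/N)(1 − μ_R) = τ_l(μ_R)`. -/
theorem tauU_eq_case_N_le_M (M N : ℕ) (hM : 0 < M) (hN : 0 < N)
    (hNM : N ≤ M)
    (muR muT : ℝ) (h : FeasRegion muR muT) (hsum : 1 ≤ muR + muT) :
    tauU M N muR muT = (1/(N:ℝ)) * (1 - muR) ∧
    tauU M N muR muT = tauL M N muR :=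
  tauU_eq_case_N_le_M_general M N hN hNM muR muT h hsum
end

section
/- Let M, N, N_T, N_R be positive integers with N_T ≥ 2 and N_R ≥ 2, and let d_{01} and d_{0N_T} be as defined (note d_{01} ≤ d_{0N_T}). For every (μ_R, μ_T) ∈ R1 ∪ R2, the optimal value of the linear program: minimize β_{01}/d_{01} + β_{0N_T}/d_{0N_T} over nonnegative reals β_{01}, β_{0N_T}, β_{N_R 0}, β_{N_R N_T} subject to β_{01} + β_{0N_T} + β_{N_R 0} + β_{N_R N_T} = 1, β_{N_R 0} + β_{N_R N_T} ≤ μ_R, and β_{01}/N_T + β_{0N_T} + β_{N_R N_T} ≤ μ_T, equals τ_gen(μ_R, μ_T). -/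
open Finset

/-- The DoF per user `d_{01}` of the `N_T × N_R` MIMO X channel:
`d_{01} = min{M N_T/N_R, q M N_T/(N_T + q N_R − q)}` with `q = ⌊N/M⌋` if `N ≥ M`, and
`d_{01} = min{N, q N N_T/(q N_T + N_R − q)}` with `q = ⌊M/N⌋` if `N < M`. -/
noncomputable def d01gen (M N NT NR : ℕ) : ℝ :=
  if M ≤ N then
    min ((M : ℝ)*NT/NR) (((N/M : ℕ) : ℝ)*M*NT/((NT : ℝ) + ((N/M : ℕ) : ℝ)*NR - ((N/M : ℕ) : ℝ)))
  else
    min (N : ℝ) (((M/N : ℕ) : ℝ)*N*NT/(((M/N : ℕ) : ℝ)*NT + (NR : ℝ) - ((M/N : ℕ) : ℝ)))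

/-- The DoF per user `d_{0N_T} = min{M N_T/N_R, N}` of the MIMO broadcast channel. -/
noncomputable def d0NTgen (M N NT NR : ℕ) : ℝ :=
  min ((M : ℝ)*NT/NR) (N : ℝ)

/-- Region `R1 = {(μ_R,μ_T) : μ_R + μ_T ≥ 1, 0 ≤ μ_R ≤ 1, 0 ≤ μ_T ≤ 1}`. -/
def regR1 (muR muT : ℝ) : Prop :=
  1 ≤ muR + muT ∧ 0 ≤ muR ∧ muR ≤ 1 ∧ 0 ≤ muT ∧ muT ≤ 1

/-- Region `R2 = {(μ_R,μ_T) : μ_R + μ_T < 1, μ_R ≥ 0, μ_T ≤ 1, μ_R + N_T μ_T ≥ 1}`. -/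
def regR2 (NT : ℕ) (muR muT : ℝ) : Prop :=
  muR + muT < 1 ∧ 0 ≤ muR ∧ muT ≤ 1 ∧ 1 ≤ muR + (NT : ℝ)*muT

/-- The achievable NDT expression `τ_gen` for the `N_T × N_R` network. -/
noncomputable def tauGen (M N NT NR : ℕ) (muR muT : ℝ) : ℝ :=
  if 1 ≤ muR + muT then
    (1/d0NTgen M N NT NR) * (1 - muR)
  else
    (1/d0NTgen M N NT NR
      - ((NT : ℝ)/((NT : ℝ) - 1)) * (1/d0NTgen M N NT NR - 1/d01gen M N NT NR)) * (1 - muR)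
    - ((NT : ℝ)/((NT : ℝ) - 1)) * (1/d01gen M N NT NR - 1/d0NTgen M N NT NR) * muT

/-- The NDT lower bound for the `N_T × N_R` network:
`max{ (1/N)(1 − μ_R), max_{s∈{1,…,N_R}} (s/(N_T M))(1 − s μ_R) }`. -/
noncomputable def tauLGen (M N NT NR : ℕ) (hNR : 0 < NR) (muR : ℝ) : ℝ :=
  max ((1/(N : ℝ)) * (1 - muR))
    ((Finset.Icc 1 NR).sup' (Finset.nonempty_Icc.mpr hNR)
      (fun s => ((s : ℝ)/((NT : ℝ)*(M : ℝ))) * (1 - (s : ℝ)*muR)))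

/-!
Write `s = max 0 (1 - μR - μT)` and `c = N_T/(N_T - 1)`. Every feasible point has
`β01 + β0N_T ≥ 1 - μR` (the receiver-cache constraint) and `β01 ≥ c s` (the transmitter-cache
constraint, in which `β01` only counts with weight `1/N_T`). Since the cost is
`(β01 + β0N_T)/d_{0N_T} + β01 (1/d_{01} - 1/d_{0N_T})` with `d_{01} ≤ d_{0N_T}`, it is at least
`(1 - μR)/d_{0N_T} + c s (1/d_{01} - 1/d_{0N_T})`, and `β = (c s, 1 - μR - c s, μR, 0)` attains
this bound. On `R1` this is the first branch of `τ_gen`, on `R2` the second.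
-/

section MemorySharing

variable (n d₁ dₙ μR μT : ℝ)

def memSharingCosts : Set ℝ :=
  {t : ℝ | ∃ b01 b0T bR0 bRT : ℝ,
    0 ≤ b01 ∧ 0 ≤ b0T ∧ 0 ≤ bR0 ∧ 0 ≤ bRT ∧
    b01 + b0T + bR0 + bRT = 1 ∧
    bR0 + bRT ≤ μR ∧
    b01 / n + b0T + bRT ≤ μT ∧
    t = b01 / d₁ + b0T / dₙ}

noncomputable def memSharingValue : ℝ :=
  (1 - μR) / dₙ + n / (n - 1) * max 0 (1 - μR - μT) * (1 / d₁ - 1 / dₙ)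

variable {n d₁ dₙ μR μT}

theorem memSharingValue_mem_memSharingCosts (hn : 1 < n) (hμR₀ : 0 ≤ μR) (hμR₁ : μR ≤ 1)
    (hμ : 1 ≤ μR + n * μT) :
    memSharingValue n d₁ dₙ μR μT ∈ memSharingCosts n d₁ dₙ μR μT := by
  have hn₁ : 0 < n - 1 := by linarith
  have hcs : n / (n - 1) * max 0 (1 - μR - μT) ≤ 1 - μR := by
    rcases max_cases 0 (1 - μR - μT) with ⟨hs, -⟩ | ⟨hs, -⟩ <;> rw [hs]
    · simpa using hμR₁
    · rw [div_mul_eq_mul_div, div_le_iff₀ hn₁]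
      nlinarith
  have hs₀ : 0 ≤ max 0 (1 - μR - μT) := le_max_left _ _
  have hs₁ : 1 - μR - μT ≤ max 0 (1 - μR - μT) := le_max_right _ _
  have hc : n / (n - 1) * (n - 1) = n := div_mul_cancel₀ n hn₁.ne'
  have hc₀ : 0 ≤ n / (n - 1) := by positivity
  unfold memSharingValue
  generalize max 0 (1 - μR - μT) = s at *
  generalize n / (n - 1) = c at *
  have hcs_div : c * s / n = c * s - s := by
    field_simp
    linear_combination (-s) * hc
  refine ⟨c * s, 1 - μR - c * s, μR, 0, by positivity, by linarith, hμR₀, le_rfl, by ring,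
    by linarith, by linarith, by ring⟩

theorem memSharingValue_le_of_mem_memSharingCosts (hn : 1 < n) (hd₁ : 0 < d₁) (hd : d₁ ≤ dₙ)
    {t : ℝ} (ht : t ∈ memSharingCosts n d₁ dₙ μR μT) :
    memSharingValue n d₁ dₙ μR μT ≤ t := by
  obtain ⟨b01, b0T, bR0, bRT, h01, -, hR0, hRT, hsum, hrelay, htx, rfl⟩ := ht
  have hn₁ : 0 < n - 1 := by linarith
  have hrelay' : 1 - μR ≤ b01 + b0T := by linarith
  have htx' : max 0 (1 - μR - μT) ≤ b01 * (n - 1) / n := by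
    have : b01 * (n - 1) / n = b01 - b01 / n := by field_simp
    exact max_le (by positivity) (by linarith)
  have hb01 : n / (n - 1) * max 0 (1 - μR - μT) ≤ b01 :=
    calc n / (n - 1) * max 0 (1 - μR - μT)
        ≤ n / (n - 1) * (b01 * (n - 1) / n) := by gcongr
      _ = b01 := by field_simp
  calc memSharingValue n d₁ dₙ μR μT
      ≤ (b01 + b0T) / dₙ + b01 * (1 / d₁ - 1 / dₙ) := by
        have hgap : 0 ≤ 1 / d₁ - 1 / dₙ := sub_nonneg.mpr (one_div_le_one_div_of_le hd₁ hd)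
        unfold memSharingValue
        gcongr
        exact (hd₁.trans_le hd).le
    _ = b01 / d₁ + b0T / dₙ := by ring

theorem sInf_memSharingCosts (hn : 1 < n) (hd₁ : 0 < d₁) (hd : d₁ ≤ dₙ) (hμR₀ : 0 ≤ μR)
    (hμR₁ : μR ≤ 1) (hμ : 1 ≤ μR + n * μT) :
    sInf (memSharingCosts n d₁ dₙ μR μT) = memSharingValue n d₁ dₙ μR μT :=
  IsLeast.csInf_eq ⟨memSharingValue_mem_memSharingCosts hn hμR₀ hμR₁ hμ,
    fun _ ↦ memSharingValue_le_of_mem_memSharingCosts hn hd₁ hd⟩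

end MemorySharing

theorem tauGen_eq_memSharingValue (M N NT NR : ℕ) (muR muT : ℝ) :
    tauGen M N NT NR muR muT =
      memSharingValue NT (d01gen M N NT NR) (d0NTgen M N NT NR) muR muT := by
  unfold tauGen memSharingValue
  split_ifs with h
  · rw [max_eq_left (by linarith)]
    ring
  · rw [max_eq_right (by linarith)]
    ring

theorem regR1_or_regR2_bounds {NT : ℕ} (hNT : 1 ≤ NT) {muR muT : ℝ}
    (h : regR1 muR muT ∨ regR2 NT muR muT) :
    0 ≤ muR ∧ muR ≤ 1 ∧ 1 ≤ muR + NT * muT := by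
  have hNT' : (1 : ℝ) ≤ NT := by exact_mod_cast hNT
  rcases h with ⟨h1, hR₀, hR₁, hT₀, -⟩ | ⟨hlt, hR₀, -, hT⟩
  · exact ⟨hR₀, hR₁, by nlinarith⟩
  · exact ⟨hR₀, by nlinarith, hT⟩

section DoF

variable {M N NT NR : ℕ}

theorem d01gen_pos (hM : 0 < M) (hN : 0 < N) (hNT : 0 < NT) (hNR : 0 < NR) :
    0 < d01gen M N NT NR := by
  have hNT' : (1 : ℝ) ≤ NT := by exact_mod_cast hNT
  have hNR' : (1 : ℝ) ≤ NR := by exact_mod_cast hNR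
  unfold d01gen
  split_ifs with hMN
  · have hq : (1 : ℝ) ≤ (N / M : ℕ) := by exact_mod_cast (Nat.one_le_div_iff hM).mpr hMN
    have hden : (0 : ℝ) < NT + (N / M : ℕ) * NR - (N / M : ℕ) := by nlinarith
    exact lt_min (by positivity) (div_pos (by positivity) hden)
  · have hq : (1 : ℝ) ≤ (M / N : ℕ) := by
      exact_mod_cast (Nat.one_le_div_iff hN).mpr (not_le.mp hMN).le
    have hden : (0 : ℝ) < (M / N : ℕ) * NT + NR - (M / N : ℕ) := by nlinarith
    exact lt_min (by positivity) (div_pos (by positivity) hden)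

theorem d01gen_le_d0NTgen (hM : 0 < M) (hN : 0 < N) (hNT : 0 < NT) (hNR : 0 < NR) :
    d01gen M N NT NR ≤ d0NTgen M N NT NR := by
  have hNT' : (1 : ℝ) ≤ NT := by exact_mod_cast hNT
  have hNR' : (1 : ℝ) ≤ NR := by exact_mod_cast hNR
  unfold d01gen d0NTgen
  split_ifs with hMN
  · have hq : (1 : ℝ) ≤ (N / M : ℕ) := by exact_mod_cast (Nat.one_le_div_iff hM).mpr hMN
    have hqM : ((N / M : ℕ) : ℝ) * M ≤ N := by exact_mod_cast Nat.div_mul_le_self N M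
    set q : ℝ := ((N / M : ℕ) : ℝ)
    have hden : (0 : ℝ) < NT + q * NR - q := by nlinarith
    have hterm : q * M * NT / (NT + q * NR - q) ≤ N := by
      rw [div_le_iff₀ hden]
      nlinarith [mul_le_mul_of_nonneg_right hqM (by positivity : (0 : ℝ) ≤ NT),
        mul_nonneg (by positivity : (0 : ℝ) ≤ N * q) (by linarith : (0 : ℝ) ≤ NR - 1)]
    exact le_min (min_le_left _ _) ((min_le_right _ _).trans hterm)
  · have hq : (1 : ℝ) ≤ (M / N : ℕ) := by
      exact_mod_cast (Nat.one_le_div_iff hN).mpr (not_le.mp hMN).le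
    have hqN : ((M / N : ℕ) : ℝ) * N ≤ M := by exact_mod_cast Nat.div_mul_le_self M N
    set q : ℝ := ((M / N : ℕ) : ℝ)
    have hden : (0 : ℝ) < q * NT + NR - q := by nlinarith
    have hterm : q * N * NT / (q * NT + NR - q) ≤ M * NT / NR := by
      rw [div_le_div_iff₀ hden (by positivity)]
      nlinarith [mul_le_mul_of_nonneg_right hqN (by positivity : (0 : ℝ) ≤ NT * NR),
        mul_nonneg (by positivity : (0 : ℝ) ≤ M * NT * q) (by linarith : (0 : ℝ) ≤ NT - 1)]
    exact le_min ((min_le_right _ _).trans hterm) (min_le_left _ _)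

end DoF

/-- For every `(μ_R, μ_T) ∈ R1 ∪ R2`, the optimal value of the
four-variable memory-sharing LP equals `τ_gen(μ_R, μ_T)`. -/
theorem gen_lp_value (M N NT NR : ℕ) (hM : 0 < M) (hN : 0 < N)
    (hNT : 2 ≤ NT) (hNR : 2 ≤ NR)
    (muR muT : ℝ) (h : regR1 muR muT ∨ regR2 NT muR muT) :
    sInf {t : ℝ | ∃ b01 b0T bR0 bRT : ℝ,
      0 ≤ b01 ∧ 0 ≤ b0T ∧ 0 ≤ bR0 ∧ 0 ≤ bRT ∧
      b01 + b0T + bR0 + bRT = 1 ∧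
      bR0 + bRT ≤ muR ∧
      b01/(NT : ℝ) + b0T + bRT ≤ muT ∧
      t = b01/d01gen M N NT NR + b0T/d0NTgen M N NT NR}
    = tauGen M N NT NR muR muT := by
  have hNT₀ : 0 < NT := by omega
  have hNR₀ : 0 < NR := by omega
  obtain ⟨hμR₀, hμR₁, hμ⟩ := regR1_or_regR2_bounds (by omega) h
  rw [tauGen_eq_memSharingValue]
  exact sInf_memSharingCosts (by exact_mod_cast hNT) (d01gen_pos hM hN hNT₀ hNR₀)
    (d01gen_le_d0NTgen hM hN hNT₀ hNR₀) hμR₀ hμR₁ hμ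
end

section
/- Let M, N, N_T, N_R be positive integers with N_T ≥ 2, N_R ≥ 2 and N·N_R ≤ M. Then for every (μ_R, μ_T) ∈ R1 ∪ R2, the achievable NDT expression equals the lower bound: τ_gen(μ_R, μ_T) = max{ (1/N)(1 − μ_R), max_{s ∈ {1,...,N_R}} (s/(N_T·M))(1 − s·μ_R) } = (1/N)(1 − μ_R). -/
/-!
When `N·N_R ≤ M` the transmitters have enough antennas that both the broadcast DoF `d_{0N_T}` and
the X-channel DoF `d_{01}` reduce to the receiver-side limit `N`. With `d_{01} = d_{0N_T}` the
correction terms of `τ_gen` vanish, so `τ_gen = (1 − μ_R)/N` on `R1 ∪ R2`. This is also the lower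
bound, because for `s ≤ N_R` we have `s·N ≤ M ≤ N_T·M`, so every cut-set term
`s(1 − sμ_R)/(N_T M) ≤ s(1 − μ_R)/(N_T M)` is dominated by `(1 − μ_R)/N`.
-/

open Finset

theorem d0NTgen_eq_right {M N NT NR : ℕ} (hNR : 0 < NR) (h : N * NR ≤ M * NT) :
    d0NTgen M N NT NR = N := by
  have hNRr : (0 : ℝ) < NR := by exact_mod_cast hNR
  have hr : (N : ℝ) * NR ≤ M * NT := by exact_mod_cast h
  exact min_eq_right ((le_div_iff₀ hNRr).2 hr)

theorem d01gen_eq_left {M N NT NR : ℕ} (hNM : N < M) (hNT : 1 ≤ NT) (hNR : 0 < NR)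
    (hq : NR ≤ M / N) : d01gen M N NT NR = N := by
  rw [d01gen, if_neg hNM.not_ge]
  set q : ℕ := M / N
  have hqr : (NR : ℝ) ≤ q := by exact_mod_cast hq
  have hNRr : (0 : ℝ) < NR := by exact_mod_cast hNR
  have hNTr : (1 : ℝ) ≤ NT := by exact_mod_cast hNT
  have hq_le : (q : ℝ) ≤ q * NT := le_mul_of_one_le_right (by positivity) hNTr
  apply min_eq_left
  rw [le_div_iff₀ (by linarith)]
  -- after clearing the denominator the claim is `N·(N_R − q) ≤ 0`
  nlinarith [Nat.cast_nonneg (α := ℝ) N]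

theorem tauGen_eq_of_d01gen_eq_d0NTgen {M N NT NR : ℕ} (muR muT : ℝ)
    (h : d01gen M N NT NR = d0NTgen M N NT NR) :
    tauGen M N NT NR muR muT = (1 / d0NTgen M N NT NR) * (1 - muR) := by
  rw [tauGen, h]
  split_ifs <;> ring

theorem regR2.muR_lt_one {NT : ℕ} {muR muT : ℝ} (hNT : 1 ≤ NT) (h : regR2 NT muR muT) :
    muR < 1 := by
  obtain ⟨hsum, -, -, hcover⟩ := h
  have hNTr : (1 : ℝ) ≤ NT := by exact_mod_cast hNT
  have hmuT : 0 < muT := by nlinarith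
  linarith

theorem cutset_term_le {s N K muR : ℝ} (hs : 1 ≤ s) (hN : 0 < N) (hsN : s * N ≤ K)
    (hmuR0 : 0 ≤ muR) (hmuR1 : muR ≤ 1) :
    s / K * (1 - s * muR) ≤ 1 / N * (1 - muR) := by
  have hK : 0 < K := by nlinarith
  calc s / K * (1 - s * muR) ≤ s / K * (1 - muR) := by
        gcongr
        nlinarith
    _ = s * N / K * ((1 - muR) / N) := by field_simp
    _ ≤ 1 * ((1 - muR) / N) :=
        mul_le_mul_of_nonneg_right ((div_le_one hK).2 hsN) (div_nonneg (by linarith) hN.le)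
    _ = 1 / N * (1 - muR) := by ring

theorem tauLGen_eq_left {M N NT NR : ℕ} (hNR : 0 < NR) (hN : 0 < N) (hcond : N * NR ≤ NT * M)
    {muR : ℝ} (hmuR0 : 0 ≤ muR) (hmuR1 : muR ≤ 1) :
    tauLGen M N NT NR hNR muR = (1 / (N : ℝ)) * (1 - muR) := by
  refine max_eq_left (Finset.sup'_le _ _ fun s hs => ?_)
  obtain ⟨hs1, hsNR⟩ := Finset.mem_Icc.1 hs
  have hsN : s * N ≤ NT * M := by nlinarith
  exact cutset_term_le (by exact_mod_cast hs1) (by exact_mod_cast hN) (by exact_mod_cast hsN)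
    hmuR0 hmuR1

/-- If `N·N_R ≤ M`, then for every `(μ_R, μ_T) ∈ R1 ∪ R2`, the
achievable NDT equals the lower bound:
`τ_gen(μ_R,μ_T) = max{ (1/N)(1−μ_R), max_{s∈{1,…,N_R}} (s/(N_T M))(1−s μ_R) } = (1/N)(1−μ_R)`. -/
theorem gen_optimal_small_N (M N NT NR : ℕ) (hN : 0 < N)
    (hNT : 2 ≤ NT) (hNR : 2 ≤ NR) (hcond : N * NR ≤ M)
    (muR muT : ℝ) (h : regR1 muR muT ∨ regR2 NT muR muT) :
    tauGen M N NT NR muR muT = tauLGen M N NT NR (by omega) muR ∧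
    tauGen M N NT NR muR muT = (1/(N : ℝ)) * (1 - muR) := by
  have hmuR0 : 0 ≤ muR := by rcases h with ⟨-, h0, -⟩ | ⟨-, h0, -⟩ <;> exact h0
  have hmuR1 : muR ≤ 1 := by
    rcases h with ⟨-, -, h1, -⟩ | h2
    exacts [h1, (h2.muR_lt_one (by omega)).le]
  have hd0 : d0NTgen M N NT NR = N := d0NTgen_eq_right (by omega) (by nlinarith)
  have hd01 : d01gen M N NT NR = N :=
    d01gen_eq_left (by nlinarith) (by omega) (by omega)
      ((Nat.le_div_iff_mul_le hN).2 (by rw [Nat.mul_comm]; exact hcond))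
  have htau : tauGen M N NT NR muR muT = (1 / (N : ℝ)) * (1 - muR) := by
    rw [tauGen_eq_of_d01gen_eq_d0NTgen muR muT (hd01.trans hd0.symm), hd0]
  have htauL : tauLGen M N NT NR (by omega) muR = (1 / (N : ℝ)) * (1 - muR) :=
    tauLGen_eq_left _ hN (by nlinarith) hmuR0 hmuR1
  exact ⟨htau.trans htauL.symm, htau⟩
end
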